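/- Given distinct nodes x̂₁, …, x̂_N ∈ ℝ^d, real data g ∈ ℝ^N, and a point x ∈ ℝ^d, define for every ε ∈ ℂ with A(ε) invertible the Gaussian RBF interpolant s(x, ε) = Σ_{i=1}^N λ_i(ε) exp(−ε²‖x − x̂_i‖²), where λ(ε) = A(ε)^{-1} g. Then whenever A(ε) is invertible, so are A(−ε), A(conj(ε)) and A(−conj(ε)), and the interpolant satisfies the symmetry relations s(x, ε) = s(x, −ε) = conj(s(x, conj(ε))) = conj(s(x, −conj(ε))). -/

import Mathlib

open Matrix

/-! The Gaussian kernel depends on `ε` only through `ε²`, and has real coefficients otherwise,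
so `A(−ε) = A(ε)` and `A(conj ε) = conj A(ε)` entrywise. Entrywise conjugation commutes with
taking the (adjugate-based) inverse, and the data `g` are real, hence `λ(conj ε) = conj λ(ε)`;
the symmetries of `s` follow termwise. -/

namespace Matrix

theorem map_star_eq_conjTranspose_transpose {m n α : Type*} [Star α] (M : Matrix m n α) :
    M.map star = Mᴴᵀ :=
  rfl

variable {n α : Type*} [Fintype n] [DecidableEq n] [CommRing α] [StarRing α]

theorem det_map_star (M : Matrix n n α) : (M.map star).det = star M.det := by
  rw [map_star_eq_conjTranspose_transpose, det_transpose, det_conjTranspose]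

theorem map_star_inv (M : Matrix n n α) : (M.map star)⁻¹ = M⁻¹.map star := by
  rw [map_star_eq_conjTranspose_transpose, map_star_eq_conjTranspose_transpose,
    ← transpose_nonsing_inv, ← conjTranspose_nonsing_inv]

end Matrix

noncomputable section

def gaussKernel (ε : ℂ) (r : ℝ) : ℂ := Complex.exp (-(ε ^ 2 * (r : ℂ) ^ 2))

theorem gaussKernel_neg (ε : ℂ) (r : ℝ) : gaussKernel (-ε) r = gaussKernel ε r := by
  rw [gaussKernel, gaussKernel, neg_sq]

theorem gaussKernel_conj (ε : ℂ) (r : ℝ) :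
    gaussKernel (starRingEnd ℂ ε) r = starRingEnd ℂ (gaussKernel ε r) := by
  simp only [gaussKernel, ← Complex.exp_conj, map_neg, map_mul, map_pow, Complex.conj_ofReal]

section Interpolation

variable {ι E : Type*} [SeminormedAddCommGroup E]

def gaussMatrix (x : ι → E) (ε : ℂ) : Matrix ι ι ℂ :=
  of fun i j => gaussKernel ε ‖x i - x j‖

theorem gaussMatrix_neg (x : ι → E) (ε : ℂ) : gaussMatrix x (-ε) = gaussMatrix x ε := by
  ext i j
  exact gaussKernel_neg ε _

theorem gaussMatrix_conj (x : ι → E) (ε : ℂ) :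
    gaussMatrix x (starRingEnd ℂ ε) = (gaussMatrix x ε).map star := by
  ext i j
  exact gaussKernel_conj ε _

variable [Fintype ι] [DecidableEq ι]

def gaussCoeffs (x : ι → E) (g : ι → ℝ) (ε : ℂ) : ι → ℂ :=
  (gaussMatrix x ε)⁻¹ *ᵥ fun j => (g j : ℂ)

def gaussInterpolant (x : ι → E) (g : ι → ℝ) (ε : ℂ) (q : E) : ℂ :=
  ∑ i, gaussCoeffs x g ε i * gaussKernel ε ‖q - x i‖

theorem gaussCoeffs_conj (x : ι → E) (g : ι → ℝ) (ε : ℂ) (i : ι) :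
    gaussCoeffs x g (starRingEnd ℂ ε) i = starRingEnd ℂ (gaussCoeffs x g ε i) := by
  rw [gaussCoeffs, gaussCoeffs, RingHom.map_mulVec, gaussMatrix_conj, map_star_inv]
  simp only [Function.comp_def, Complex.conj_ofReal]
  rfl

theorem gaussInterpolant_neg (x : ι → E) (g : ι → ℝ) (ε : ℂ) (q : E) :
    gaussInterpolant x g (-ε) q = gaussInterpolant x g ε q := by
  simp only [gaussInterpolant, gaussCoeffs, gaussMatrix_neg, gaussKernel_neg]

theorem gaussInterpolant_conj (x : ι → E) (g : ι → ℝ) (ε : ℂ) (q : E) :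
    gaussInterpolant x g (starRingEnd ℂ ε) q = starRingEnd ℂ (gaussInterpolant x g ε q) := by
  simp only [gaussInterpolant, map_sum, map_mul, gaussCoeffs_conj, gaussKernel_conj]

end Interpolation

end

theorem stmt3_general {N d : ℕ} (x : Fin N → EuclideanSpace ℝ (Fin d))
    (g : Fin N → ℝ) (p : EuclideanSpace ℝ (Fin d))
    (A : ℂ → Matrix (Fin N) (Fin N) ℂ)
    (hA : ∀ ε i j, A ε i j = Complex.exp (-(ε ^ 2 * (‖x i - x j‖ : ℂ) ^ 2)))
    (lam : ℂ → Fin N → ℂ)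
    (hlam : ∀ ε, lam ε = (A ε)⁻¹.mulVec fun i => (g i : ℂ))
    (s : EuclideanSpace ℝ (Fin d) → ℂ → ℂ)
    (hs : ∀ q ε, s q ε = ∑ i, lam ε i * Complex.exp (-(ε ^ 2 * (‖q - x i‖ : ℂ) ^ 2)))
    (ε : ℂ) (hinv : IsUnit (A ε).det) :
    IsUnit (A (-ε)).det ∧ IsUnit (A (starRingEnd ℂ ε)).det ∧
    IsUnit (A (-(starRingEnd ℂ ε))).det ∧
    s p ε = s p (-ε) ∧
    s p ε = starRingEnd ℂ (s p (starRingEnd ℂ ε)) ∧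
    s p ε = starRingEnd ℂ (s p (-(starRingEnd ℂ ε))) := by
  have hA_eq : A = gaussMatrix x := funext fun e => Matrix.ext (hA e)
  have hs_eq : ∀ e, s p e = gaussInterpolant x g e p := fun e => by
    rw [hs, hlam, hA_eq]
    rfl
  have hconj : IsUnit (gaussMatrix x (starRingEnd ℂ ε)).det := by
    rw [gaussMatrix_conj, det_map_star]
    exact (hA_eq ▸ hinv).star
  subst hA_eq
  simp only [hs_eq, gaussMatrix_neg, gaussInterpolant_neg, gaussInterpolant_conj, Complex.conj_conj,
    and_true]
  exact ⟨hinv, hconj, hconj⟩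

/-- For distinct nodes `x̂᾿ᵢ ∈ ℝ^d`, real data `g` and an evaluation point
`x`, the Gaussian RBF interpolant `s(x,ε) = Σᵢ λᵢ(ε) exp(−ε²‖x−x̂ᵢ‖²)` with
`λ(ε) = A(ε)⁻¹ g` satisfies: whenever `A(ε)` is invertible so are `A(−ε)`, `A(conj ε)` and
`A(−conj ε)`, and `s(x,ε) = s(x,−ε) = conj(s(x, conj ε)) = conj(s(x, −conj ε))`. -/
theorem stmt3 {N d : ℕ} (x : Fin N → EuclideanSpace ℝ (Fin d))
    (hx : Function.Injective x) (g : Fin N → ℝ) (p : EuclideanSpace ℝ (Fin d))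
    (A : ℂ → Matrix (Fin N) (Fin N) ℂ)
    (hA : ∀ ε i j, A ε i j = Complex.exp (-(ε ^ 2 * (‖x i - x j‖ : ℂ) ^ 2)))
    (lam : ℂ → Fin N → ℂ)
    (hlam : ∀ ε, lam ε = (A ε)⁻¹.mulVec fun i => (g i : ℂ))
    (s : EuclideanSpace ℝ (Fin d) → ℂ → ℂ)
    (hs : ∀ q ε, s q ε = ∑ i, lam ε i * Complex.exp (-(ε ^ 2 * (‖q - x i‖ : ℂ) ^ 2)))
    (ε : ℂ) (hinv : IsUnit (A ε).det) :
    IsUnit (A (-ε)).det ∧ IsUnit (A (starRingEnd ℂ ε)).det ∧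
    IsUnit (A (-(starRingEnd ℂ ε))).det ∧
    s p ε = s p (-ε) ∧
    s p ε = starRingEnd ℂ (s p (starRingEnd ℂ ε)) ∧
    s p ε = starRingEnd ℂ (s p (-(starRingEnd ℂ ε))) :=
  stmt3_general x g p A hA lam hlam s hs ε hinv
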